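/- arXiv:2207.08965 — 2 statements merged into one kernel-verified Lean document; each statement's English description precedes it below -/
import Mathlib

section
/- Let y : E₀ → ℝ lie in Circ̄, and let i, j ∈ [n]. Then SArb_i(y) = SArb_j(y); i.e., the arborescence-generating polynomial evaluated on any point of the circulation hyperplane is independent of the choice of root. -/
open Finset

open scoped Classical

/-- The set `E₀` of non-loop directed edges on vertex set `Fin n`. -/
def E0 (n : ℕ) : Finset (Fin n × Fin n) :=
  Finset.univ.filter (fun e => e.1 ≠ e.2)

/-- The reverse of a directed edge. -/
def rev {n : ℕ} (e : Fin n × Fin n) : Fin n × Fin n := (e.2, e.1)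

/-- The underlying undirected (simple) graph of a set of directed edges. -/
def undirGraph (n : ℕ) (D : Finset (Fin n × Fin n)) : SimpleGraph (Fin n) where
  Adj u v := u ≠ v ∧ ((u, v) ∈ D ∨ (v, u) ∈ D)
  symm := ⟨fun u v h => ⟨h.1.symm, h.2.symm⟩⟩
  loopless := ⟨fun u h => h.1 rfl⟩

/-- There is a directed walk from `i` to `j` using only edges in `D`. -/
def reachesIn (n : ℕ) (D : Finset (Fin n × Fin n)) (i j : Fin n) : Prop :=
  Relation.ReflTransGen (fun a b => (a, b) ∈ D) i j

/-- `T` is a directed tree: `n-1` non-loop directed edges whose underlying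
undirected edges form a spanning tree of `Fin n`. -/
def IsDirTree (n : ℕ) (T : Finset (Fin n × Fin n)) : Prop :=
  T ⊆ E0 n ∧ T.card = n - 1 ∧ (undirGraph n T).Connected

/-- `A` is an arborescence rooted at `r`: a directed tree such that from every
vertex there is a directed walk to `r` using only edges of `A`. -/
def IsArb (n : ℕ) (r : Fin n) (A : Finset (Fin n × Fin n)) : Prop :=
  IsDirTree n A ∧ ∀ v : Fin n, reachesIn n A v r

/-- `Flip_f` of a single edge: reverse the edge iff `f e = 1`. -/
noncomputable def flipEdge (n : ℕ) (f : Fin n × Fin n → ℝ) (e : Fin n × Fin n) :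
    Fin n × Fin n :=
  if f e = 1 then rev e else e

/-- `Flip_f` of a set of edges. -/
noncomputable def flipSet (n : ℕ) (f : Fin n × Fin n → ℝ)
    (T : Finset (Fin n × Fin n)) : Finset (Fin n × Fin n) :=
  T.image (flipEdge n f)

/-- Membership in the flow-based polytope with variable edge set `E` and
demands `d` (points are extended by zero outside `E`). -/
def memFlowPolytope (n : ℕ) (E : Finset (Fin n × Fin n)) (d : Fin n → ℤ)
    (x : Fin n × Fin n → ℝ) : Prop :=
  (∀ e, e ∉ E → x e = 0) ∧ (∀ e ∈ E, x e ∈ Set.Icc (0 : ℝ) 1) ∧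
    ∀ v : Fin n, (∑ i, x (v, i)) - (∑ i, x (i, v)) = (d v : ℝ)

/-- A vertex of the flow-based polytope: a 0/1 point of the polytope. -/
def IsVertex (n : ℕ) (E : Finset (Fin n × Fin n)) (d : Fin n → ℤ)
    (f : Fin n × Fin n → ℝ) : Prop :=
  memFlowPolytope n E d f ∧ ∀ e ∈ E, f e = 0 ∨ f e = 1

/-- The 0/1 indicator of a set of edges. -/
def ind (n : ℕ) (S : Finset (Fin n × Fin n)) : Fin n × Fin n → ℝ :=
  fun e => if e ∈ S then 1 else 0

/-- The vertices of the flow-based polytope, encoded by their supports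
(sets of edges carrying flow `1`). -/
noncomputable def flowVertices (n : ℕ) (E : Finset (Fin n × Fin n)) (d : Fin n → ℤ) :
    Finset (Finset (Fin n × Fin n)) :=
  Finset.univ.filter (fun S => S ⊆ E ∧ memFlowPolytope n E d (ind n S))

/-- The polynomial `P_{f,r}(x)` of the Bernoulli factory. Since `f` is 0/1,
`x_e^{f_e}(1-x_e)^{1-f_e}` is `x_e` if `f_e = 1` and `1 - x_e` otherwise, and
`x_e^{1-f_e}(1-x_e)^{f_e}` is `1 - x_e` if `f_e = 1` and `x_e` otherwise. -/
noncomputable def Pfr (n : ℕ) (E : Finset (Fin n × Fin n))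
    (f : Fin n × Fin n → ℝ) (r : Fin n) (x : Fin n × Fin n → ℝ) : ℝ :=
  (∏ e ∈ E, if f e = 1 then x e else 1 - x e) *
    ∑ T ∈ Finset.univ.filter
        (fun T : Finset (Fin n × Fin n) =>
          IsDirTree n T ∧ T ⊆ E ∧ IsArb n r (flipSet n f T)),
      ∏ e ∈ T, (if f e = 1 then 1 - x e else x e)

/-- Membership in the circulation hyperplane `Circ̄`. -/
def memCircBar (n : ℕ) (y : Fin n × Fin n → ℝ) : Prop :=
  ∀ v : Fin n,
    (∑ i ∈ Finset.univ.filter (fun i => i ≠ v), y (v, i)) -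
      (∑ i ∈ Finset.univ.filter (fun i => i ≠ v), y (i, v)) = 0

/-- The arborescence-generating polynomial `SArb_r(y)`. -/
noncomputable def SArb (n : ℕ) (r : Fin n) (y : Fin n × Fin n → ℝ) : ℝ :=
  ∑ A ∈ Finset.univ.filter (fun A : Finset (Fin n × Fin n) => IsArb n r A),
    ∏ e ∈ A, y e

/-- The map `M_f`: `M_f(x)_e = x_e (1 - f_e) + (1 - x_ē) f_ē`. -/
def Mf (n : ℕ) (f x : Fin n × Fin n → ℝ) : Fin n × Fin n → ℝ :=
  fun e => x e * (1 - f e) + (1 - x (rev e)) * f (rev e)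

/-! Let `L` be the out-degree Laplacian of `y`, with rows `∑ᵤ y(v,u) (eᵥ - eᵤ)`. Its rows always
sum to zero, and its columns sum to zero exactly when `y` is a circulation. For such a matrix the
all-ones vector is in the kernel of `L` and of `Lᵀ`, which forces all diagonal entries of
`adj L` to coincide.

It remains to see that `adj L r r = SArb_r(y)` (the directed matrix-tree theorem). Replacing row
`r` of `L` by `eᵣ` and expanding every other row multilinearly writes the determinant as a sum over
parent maps `g` with `g r = r` of `∏_{v ≠ r} y(v, g v)` times the determinant of the matrix with
rows `eᵥ - e_{g v}`. That determinant is `1` when iterating `g` leads every vertex to `r`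
(the matrix is unitriangular once vertices are ordered by their distance to `r`), and `0`
otherwise (the indicator of the vertices that never reach `r` lies in its kernel). The parent
maps of the first kind correspond exactly to the arborescences rooted at `r`. -/

namespace Matrix

variable {ι R : Type*} [Fintype ι] [DecidableEq ι] [CommRing R]

theorem adjugate_apply_eq_of_sum_row_eq_zero {M : Matrix ι ι R} (hM : ∀ i, ∑ j, M i j = 0)
    (i j k : ι) : M.adjugate i k = M.adjugate j k := by
  have hsplit : (Pi.single i 1 : ι → R) = Pi.single j 1 + (Pi.single i 1 - Pi.single j 1) := by
    abel
  have hzero : (M.updateRow k (Pi.single i 1 - Pi.single j 1)).det = 0 := by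
    refine det_eq_zero_of_mulVec_eq_zero_of_mem_nonZeroDivisors (v := fun _ => 1) (i := i) ?_
      (one_mem _)
    funext l
    rcases eq_or_ne l k with rfl | hl
    · simp [mulVec, dotProduct]
    · simp [mulVec, dotProduct, hl, hM l]
  rw [adjugate_apply, adjugate_apply, hsplit, det_updateRow_add, hzero, add_zero]

theorem adjugate_apply_eq_of_sum_col_eq_zero {M : Matrix ι ι R} (hM : ∀ j, ∑ i, M i j = 0)
    (i j k : ι) : M.adjugate k i = M.adjugate k j := by
  simpa [← adjugate_transpose] using
    adjugate_apply_eq_of_sum_row_eq_zero (M := Mᵀ) (by simpa using hM) i j k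

theorem adjugate_apply_self_eq_of_sum_eq_zero {M : Matrix ι ι R} (hrow : ∀ i, ∑ j, M i j = 0)
    (hcol : ∀ j, ∑ i, M i j = 0) (i j : ι) : M.adjugate i i = M.adjugate j j :=
  (adjugate_apply_eq_of_sum_row_eq_zero hrow i j i).trans
    (adjugate_apply_eq_of_sum_col_eq_zero hcol i j j)

theorem det_eq_one_of_unitriangular {α : Type*} [LinearOrder α] (b : ι → α) {M : Matrix ι ι R}
    (h : ∀ i j, b i ≤ b j → M i j = (1 : Matrix ι ι R) i j) : M.det = 1 := by
  have hM : M.BlockTriangular (OrderDual.toDual ∘ b) := fun i j hij =>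
    (h i j hij.le).trans (one_apply_ne (ne_of_apply_ne b hij.ne'))
  have hblock : ∀ a, M.toSquareBlock (OrderDual.toDual ∘ b) a = 1 := by
    intro a
    ext i j
    rw [toSquareBlock_def, of_apply, h i j (congrArg OrderDual.ofDual (i.2.trans j.2.symm)).le]
    simp [one_apply, Subtype.ext_iff]
  rw [hM.det]
  simp [hblock]

end Matrix

section ParentMap

open Matrix

variable {V : Type*} [DecidableEq V] (R : Type*) [CommRing R]

def ReachesRoot (r : V) (g : V → V) : Prop :=
  ∀ v, ∃ k, g^[k] v = r

def parentRow (r v u : V) : V → R :=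
  if v = r then Pi.single r 1 else Pi.single v 1 - Pi.single u 1

def parentMatrix (r : V) (g : V → V) : Matrix V V R :=
  of fun v => parentRow R r v (g v)

variable {R} {r : V} {g : V → V}

theorem parentMatrix_root : parentMatrix R r g r = Pi.single r 1 :=
  if_pos rfl

theorem parentMatrix_of_ne {v : V} (hv : v ≠ r) :
    parentMatrix R r g v = Pi.single v 1 - Pi.single (g v) 1 :=
  if_neg hv

variable [Fintype V]

theorem det_parentMatrix_of_not_reachesRoot (h : ¬ ReachesRoot r g) :
    (parentMatrix R r g).det = 0 := by
  obtain ⟨v₀, hv₀⟩ := not_forall.mp h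
  let x : V → R := fun v => if ∃ k, g^[k] v = r then 0 else 1
  have hr : ∃ k, g^[k] r = r := ⟨0, rfl⟩
  have hstep : ∀ v, v ≠ r → ((∃ k, g^[k] v = r) ↔ ∃ k, g^[k] (g v) = r) := by
    intro v hv
    constructor
    · rintro ⟨_ | k, hk⟩
      · exact absurd hk hv
      · exact ⟨k, hk⟩
    · rintro ⟨k, hk⟩
      exact ⟨k + 1, hk⟩
  refine det_eq_zero_of_mulVec_eq_zero_of_mem_nonZeroDivisors (v := x) (i := v₀) ?_ ?_
  · funext v
    change parentMatrix R r g v ⬝ᵥ x = 0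
    by_cases hv : v = r
    · simp [hv, parentMatrix_root, x, hr]
    · simp [parentMatrix_of_ne hv, x, hstep v hv, sub_dotProduct]
  · simp [x, hv₀]

theorem det_parentMatrix_of_reachesRoot (h : ReachesRoot r g) : (parentMatrix R r g).det = 1 := by
  obtain ⟨depth, hspec, hmin⟩ : ∃ d : V → ℕ, (∀ v, g^[d v] v = r) ∧ ∀ v k, g^[k] v = r → d v ≤ k :=
    ⟨fun v => Nat.find (h v), fun v => Nat.find_spec (h v), fun v _ hk => Nat.find_min' (h v) hk⟩
  have hdepth : ∀ v, v ≠ r → depth (g v) < depth v := by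
    intro v hv
    have hv' := hspec v
    obtain ⟨k, hk⟩ : ∃ k, depth v = k + 1 :=
      Nat.exists_eq_succ_of_ne_zero fun h0 => hv (by rwa [h0] at hv')
    rw [hk, Function.iterate_succ_apply] at hv'
    exact (hmin (g v) k hv').trans_lt (hk ▸ k.lt_succ_self)
  refine det_eq_one_of_unitriangular depth fun v w hvw => ?_
  by_cases hv : v = r
  · subst hv
    simp [parentMatrix_root, one_apply, Pi.single_apply, eq_comm]
  · have hw : w ≠ g v := fun hw => (hvw.trans_lt (hw ▸ hdepth v hv)).false
    simp [parentMatrix_of_ne hv, one_apply, Pi.single_apply, hw, eq_comm]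

theorem det_parentMatrix [Decidable (ReachesRoot r g)] :
    (parentMatrix R r g).det = if ReachesRoot r g then 1 else 0 := by
  split_ifs with h
  · exact det_parentMatrix_of_reachesRoot h
  · exact det_parentMatrix_of_not_reachesRoot h

end ParentMap

section Laplacian

open Matrix

variable {V : Type*} [Fintype V] [DecidableEq V] {R : Type*} [CommRing R]

/-- The out-degree Laplacian `D_out - Y`; the loop weights `y (v, v)` cancel. -/
def outLaplacian (y : V × V → R) : Matrix V V R :=
  of fun v => ∑ u, y (v, u) • (Pi.single v 1 - Pi.single u 1)

theorem outLaplacian_apply (y : V × V → R) (v w : V) :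
    outLaplacian y v w = (if w = v then ∑ u, y (v, u) else 0) - y (v, w) := by
  simp [outLaplacian, Finset.sum_apply, Pi.single_apply, mul_sub, Finset.sum_sub_distrib]

theorem sum_outLaplacian_row (y : V × V → R) (v : V) : ∑ w, outLaplacian y v w = 0 := by
  simp [outLaplacian_apply, Finset.sum_sub_distrib]

theorem sum_outLaplacian_col (y : V × V → R) (w : V) (h : ∑ u, y (w, u) = ∑ u, y (u, w)) :
    ∑ v, outLaplacian y v w = 0 := by
  simp [outLaplacian_apply, Finset.sum_sub_distrib, h]

theorem det_updateRow_outLaplacian (y : V × V → R) (r : V) :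
    ((outLaplacian y).updateRow r (Pi.single r 1)).det =
      ∑ g ∈ univ.filter (fun g => g r = r ∧ ReachesRoot r g), ∏ v ∈ univ.erase r, y (v, g v) := by
  let A : V → Finset V := fun v => if v = r then {r} else univ
  let c : V → V → R := fun v u => if v = r then 1 else y (v, u)
  have hrows : (outLaplacian y).updateRow r (Pi.single r 1) =
      fun v => ∑ u ∈ A v, c v u • parentRow R r v u := by
    funext v
    by_cases hv : v = r
    · subst hv; simp [A, c, parentRow]
    · simp only [A, c, parentRow, hv, updateRow_ne, ne_eq, not_false_eq_true, if_false]
      rfl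
  have hA : Fintype.piFinset A = univ.filter fun g => g r = r := by
    ext g
    simp only [Fintype.mem_piFinset, mem_filter, mem_univ, true_and, A]
    exact ⟨fun h => by simpa using h r, fun h v => by split_ifs with hv <;> simp [hv, h]⟩
  have hc : ∀ g : V → V, g r = r → ∏ v, c v (g v) = ∏ v ∈ univ.erase r, y (v, g v) := by
    intro g _
    rw [← mul_prod_erase univ _ (mem_univ r)]
    simp only [c, if_pos rfl, one_mul]
    exact prod_congr rfl fun v hv => if_neg (ne_of_mem_erase hv)
  calc ((outLaplacian y).updateRow r (Pi.single r 1)).det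
      = ∑ g ∈ Fintype.piFinset A, det (of fun v w => c v (g v) * parentMatrix R r g v w) := by
        rw [hrows]
        exact detRowAlternating.toMultilinearMap.map_sum_finset _ _
    _ = ∑ g ∈ univ.filter (fun g => g r = r),
          (∏ v ∈ univ.erase r, y (v, g v)) * (parentMatrix R r g).det := by
        rw [hA]
        exact sum_congr rfl fun g hg => by rw [det_mul_column, hc g (mem_filter.mp hg).2]
    _ = _ := by
        simp_rw [det_parentMatrix, mul_ite, mul_one, mul_zero, ← sum_filter, filter_filter]

end Laplacian

section Arborescence

open Finset

variable {n : ℕ} {r : Fin n} {g : Fin n → Fin n}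

def parentEdges (r : Fin n) (g : Fin n → Fin n) : Finset (Fin n × Fin n) :=
  (univ.erase r).image fun v => (v, g v)

theorem mem_parentEdges {e : Fin n × Fin n} : e ∈ parentEdges r g ↔ e.1 ≠ r ∧ e.2 = g e.1 := by
  constructor
  · rintro h
    obtain ⟨v, hv, rfl⟩ := mem_image.mp h
    exact ⟨ne_of_mem_erase hv, rfl⟩
  · rintro ⟨h1, h2⟩
    exact mem_image.mpr ⟨e.1, mem_erase.mpr ⟨h1, mem_univ _⟩, Prod.ext rfl h2.symm⟩

theorem card_parentEdges : (parentEdges r g).card = n - 1 := by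
  rw [parentEdges, card_image_of_injective _ fun v w h => congrArg Prod.fst h,
    card_erase_of_mem (mem_univ r), card_univ, Fintype.card_fin]

theorem reachesIn_parentEdges_iff {v : Fin n} :
    reachesIn n (parentEdges r g) v r ↔ ∃ k, g^[k] v = r := by
  constructor
  · intro h
    induction h using Relation.ReflTransGen.head_induction_on with
    | refl => exact ⟨0, rfl⟩
    | head hab _ ih =>
      obtain ⟨k, hk⟩ := ih
      exact ⟨k + 1, by rw [Function.iterate_succ_apply, ← (mem_parentEdges.mp hab).2, hk]⟩
  · rintro ⟨k, hk⟩
    induction k generalizing v with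
    | zero => exact hk ▸ Relation.ReflTransGen.refl
    | succ k ih =>
      by_cases hv : v = r
      · exact hv ▸ Relation.ReflTransGen.refl
      · exact Relation.ReflTransGen.head (mem_parentEdges.mpr ⟨hv, rfl⟩) (ih hk)

theorem reachable_of_reachesIn {D : Finset (Fin n × Fin n)} (hD : D ⊆ E0 n) {u w : Fin n}
    (h : reachesIn n D u w) : (undirGraph n D).Reachable u w := by
  induction h with
  | refl => rfl
  | tail _ hbc ih =>
    exact ih.trans (SimpleGraph.Adj.reachable ⟨(mem_filter.mp (hD hbc)).2, Or.inl hbc⟩)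

theorem connected_undirGraph_of_reachesIn {D : Finset (Fin n × Fin n)} (hD : D ⊆ E0 n)
    (h : ∀ v, reachesIn n D v r) : (undirGraph n D).Connected :=
  have : Nonempty (Fin n) := ⟨r⟩
  SimpleGraph.Connected.mk fun u v =>
    (reachable_of_reachesIn hD (h u)).trans (reachable_of_reachesIn hD (h v)).symm

theorem isArb_parentEdges (h : ReachesRoot r g) : IsArb n r (parentEdges r g) := by
  have hreach : ∀ v, reachesIn n (parentEdges r g) v r := fun v =>
    reachesIn_parentEdges_iff.mpr (h v)
  have hsub : parentEdges r g ⊆ E0 n := by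
    intro e he
    obtain ⟨hr, he2⟩ := mem_parentEdges.mp he
    refine mem_filter.mpr ⟨mem_univ _, fun hfix => ?_⟩
    obtain ⟨k, hk⟩ := h e.1
    rw [Function.iterate_fixed (he2.symm.trans hfix.symm)] at hk
    exact hr hk
  exact ⟨⟨hsub, card_parentEdges, connected_undirGraph_of_reachesIn hsub hreach⟩, hreach⟩

theorem exists_parentEdges_eq_of_isArb {A : Finset (Fin n × Fin n)} (hA : IsArb n r A) :
    ∃ g, g r = r ∧ parentEdges r g = A := by
  obtain ⟨⟨-, hcard, -⟩, hreach⟩ := hA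
  have hout : ∀ v, v ≠ r → ∃ w, (v, w) ∈ A := by
    intro v hv
    rcases (hreach v).cases_head with h | ⟨w, hw, -⟩
    · exact absurd h hv
    · exact ⟨w, hw⟩
  choose! g hg using hout
  refine ⟨Function.update g r r, Function.update_self _ _ _, ?_⟩
  refine eq_of_subset_of_card_le (fun e he => ?_) (by rw [hcard, card_parentEdges])
  obtain ⟨hr, he2⟩ := mem_parentEdges.mp he
  rw [Function.update_of_ne hr] at he2
  rw [show e = (e.1, g e.1) from Prod.ext rfl he2]
  exact hg e.1 hr

theorem filter_isArb_eq_image :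
    univ.filter (IsArb n r) =
      (univ.filter fun g => g r = r ∧ ReachesRoot r g).image (parentEdges r) := by
  ext A
  simp only [mem_filter, mem_univ, true_and, mem_image]
  constructor
  · intro hA
    obtain ⟨g, hgr, rfl⟩ := exists_parentEdges_eq_of_isArb hA
    exact ⟨g, ⟨hgr, fun v => reachesIn_parentEdges_iff.mp (hA.2 v)⟩, rfl⟩
  · rintro ⟨g, ⟨-, hg⟩, rfl⟩
    exact isArb_parentEdges hg

theorem injOn_parentEdges : Set.InjOn (parentEdges (n := n) r) {g | g r = r} := by
  intro g hg g' hg' h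
  funext v
  by_cases hv : v = r
  · rw [hv, hg, hg']
  · have hmem : (v, g v) ∈ parentEdges r g' := h ▸ mem_parentEdges.mpr ⟨hv, rfl⟩
    exact (mem_parentEdges.mp hmem).2

theorem sArb_eq_sum_reachesRoot (y : Fin n × Fin n → ℝ) (r : Fin n) :
    SArb n r y =
      ∑ g ∈ univ.filter (fun g => g r = r ∧ ReachesRoot r g), ∏ v ∈ univ.erase r, y (v, g v) := by
  rw [SArb, filter_isArb_eq_image, sum_image fun g hg g' hg' =>
    injOn_parentEdges (mem_filter.mp hg).2.1 (mem_filter.mp hg').2.1]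
  refine sum_congr rfl fun g _ => ?_
  exact prod_image fun v _ w _ h => congrArg Prod.fst h

end Arborescence

theorem sum_out_eq_sum_in_of_memCircBar {n : ℕ} {y : Fin n × Fin n → ℝ} (hy : memCircBar n y)
    (w : Fin n) : ∑ u, y (w, u) = ∑ u, y (u, w) := by
  have hw := hy w
  rw [filter_ne'] at hw
  rw [← add_sum_erase _ _ (mem_univ w), ← add_sum_erase _ (fun u => y (u, w)) (mem_univ w)]
  linarith

theorem adjugate_outLaplacian_apply_self {n : ℕ} (y : Fin n × Fin n → ℝ) (r : Fin n) :
    (outLaplacian y).adjugate r r = SArb n r y := by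
  rw [Matrix.adjugate_apply, det_updateRow_outLaplacian, sArb_eq_sum_reachesRoot]

theorem sarb_root_independent_general (n : ℕ)
    (y : Fin n × Fin n → ℝ) (hy : memCircBar n y) (i j : Fin n) :
    SArb n i y = SArb n j y := by
  rw [← adjugate_outLaplacian_apply_self, ← adjugate_outLaplacian_apply_self]
  exact Matrix.adjugate_apply_self_eq_of_sum_eq_zero (sum_outLaplacian_row y)
    (fun w => sum_outLaplacian_col y w (sum_out_eq_sum_in_of_memCircBar hy w)) i j

/-- `SArb` is root-independent on the circulation hyperplane. -/
theorem sarb_root_independent (n : ℕ) (hn : 2 ≤ n)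
    (y : Fin n × Fin n → ℝ) (hy : memCircBar n y) (i j : Fin n) :
    SArb n i y = SArb n j y :=
  sarb_root_independent_general n y hy i j
end

section
/- Let P be a flow-based polytope with edge set E, let f be a vertex of P, and let r ∈ [n]. Then for every x : E → ℝ the factorization P_{f,r}(x) = (∏_{e∈E} x_e^{f_e}(1−x_e)^{1−f_e}) · SArb_r(M_f(x)) holds as a polynomial identity. -/
open Finset

open scoped Classical

/-! Since `f` is 0/1, vanishes off `E`, and `x` vanishes off `E`, the entry `M_f(x)_a` is the sum
of the weights `x_e^{1-f_e}(1-x_e)^{f_e}` over the edges `e ∈ E` with `Flip_f(e) = a`. Expanding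
`∏_{a ∈ A} M_f(x)_a` for an arborescence `A` thus sums over the sets `T ⊆ E` on which `Flip_f` is
injective with `Flip_f(T) = A`. Because `Flip_f` only reverses edges, such a `T` has the same
underlying undirected graph and size as `A`, so it is a directed tree; conversely `Flip_f` is
injective on every directed tree, since a connected graph on `n` vertices with `n - 1` edges
cannot contain an edge together with its reverse. -/

namespace Finset

variable {α β R : Type*} [DecidableEq α] [DecidableEq β] [CommSemiring R]

theorem image_erase_of_injOn {φ : α → β} {T : Finset α} (hφ : Set.InjOn φ T) {t : α}
    (ht : t ∈ T) : (T.erase t).image φ = (T.image φ).erase (φ t) := by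
  refine subset_antisymm ?_ (erase_image_subset_image_erase φ T t)
  intro b hb
  obtain ⟨u, hu, rfl⟩ := mem_image.mp hb
  obtain ⟨hut, hu⟩ := mem_erase.mp hu
  exact mem_erase.mpr ⟨fun h => hut (hφ hu ht h), mem_image_of_mem φ hu⟩

variable (φ : α → β) (C : Finset α) (w : α → R)

theorem sum_prod_sections (A : Finset β) :
    ∑ T ∈ C.powerset.filter (fun T : Finset α => Set.InjOn φ T ∧ T.image φ = A), ∏ t ∈ T, w t
      = ∏ a ∈ A, ∑ t ∈ C with φ t = a, w t := by
  induction A using Finset.induction_on with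
  | empty =>
    have hempty : C.powerset.filter (fun T : Finset α => Set.InjOn φ T ∧ T.image φ = ∅) = {∅} := by
      ext T
      aesop
    rw [hempty, sum_singleton, prod_empty, prod_empty]
  | insert a A ha ih =>
    rw [prod_insert ha, ← ih, sum_mul_sum, ← sum_product']
    -- a section over `insert a A` is a section over `A` plus one point of the fiber over `a`
    symm
    refine sum_bij (fun p _ => insert p.1 p.2) ?_ ?_ ?_ ?_
    · rintro ⟨t, T⟩ hp
      simp only [mem_product, mem_filter, mem_powerset] at hp ⊢
      obtain ⟨⟨htC, rfl⟩, hTC, hinj, rfl⟩ := hp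
      have ht : t ∉ T := fun ht => ha (mem_image_of_mem φ ht)
      refine ⟨insert_subset htC hTC, ?_, image_insert φ t T⟩
      rw [coe_insert, Set.injOn_insert (mem_coe.not.mpr ht)]
      exact ⟨hinj, by simpa using ha⟩
    · rintro ⟨t, T⟩ hp ⟨u, U⟩ hq (h : insert t T = insert u U)
      simp only [mem_product, mem_filter, mem_powerset] at hp hq
      obtain ⟨⟨-, hta⟩, -, -, hTA⟩ := hp
      obtain ⟨⟨-, hua⟩, -, -, hUA⟩ := hq
      have ht : t ∉ T := fun ht => ha (hta ▸ hTA ▸ mem_image_of_mem φ ht)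
      have hu : u ∉ U := fun hu => ha (hua ▸ hUA ▸ mem_image_of_mem φ hu)
      have htU : t ∉ U := fun htU => ha (hta ▸ hUA ▸ mem_image_of_mem φ htU)
      obtain rfl : t = u := (mem_insert.mp (h ▸ mem_insert_self t T)).resolve_right htU
      rw [← erase_insert ht, ← erase_insert hu, h]
    · intro T hT
      simp only [mem_filter, mem_powerset] at hT
      obtain ⟨hTC, hinj, hTA⟩ := hT
      obtain ⟨t, ht, rfl⟩ := mem_image.mp (hTA ▸ mem_insert_self a A)
      refine ⟨⟨t, T.erase t⟩, ?_, insert_erase ht⟩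
      simp only [mem_product, mem_filter, mem_powerset]
      refine ⟨⟨hTC ht, trivial⟩, (erase_subset t T).trans hTC, hinj.mono (by simp), ?_⟩
      rw [image_erase_of_injOn hinj ht, hTA, erase_insert ha]
    · rintro ⟨t, T⟩ hp
      simp only [mem_product, mem_filter, mem_powerset] at hp
      obtain ⟨⟨-, rfl⟩, -, -, rfl⟩ := hp
      rw [prod_insert fun ht => ha (mem_image_of_mem φ ht)]

theorem sum_prod_sections_of_mem (𝒜 : Finset (Finset β)) :
    ∑ T ∈ C.powerset.filter (fun T : Finset α => Set.InjOn φ T ∧ T.image φ ∈ 𝒜), ∏ t ∈ T, w t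
      = ∑ A ∈ 𝒜, ∏ a ∈ A, ∑ t ∈ C with φ t = a, w t := by
  rw [← sum_fiberwise_of_maps_to (g := fun T => T.image φ) (t := 𝒜) (by simp)]
  refine sum_congr rfl fun A hA => ?_
  rw [← sum_prod_sections, filter_filter]
  refine sum_congr (filter_congr fun T _ => ?_) fun _ _ => rfl
  exact ⟨fun h => ⟨h.1.1, h.2⟩, fun h => ⟨⟨h.1, h.2 ▸ hA⟩, h.2⟩⟩

end Finset

@[simp]
theorem rev_rev {n : ℕ} (e : Fin n × Fin n) : rev (rev e) = e := rfl

@[simp]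
theorem rev_mem_E0 {n : ℕ} {e : Fin n × Fin n} : rev e ∈ E0 n ↔ e ∈ E0 n := by
  simp [E0, rev, eq_comm]

def undirEdges {n : ℕ} (D : Finset (Fin n × Fin n)) : Finset (Sym2 (Fin n)) :=
  D.image fun e => s(e.1, e.2)

theorem mk_mem_undirEdges {n : ℕ} {D : Finset (Fin n × Fin n)} {u v : Fin n} :
    s(u, v) ∈ undirEdges D ↔ (u, v) ∈ D ∨ (v, u) ∈ D := by
  simp only [undirEdges, mem_image, Prod.exists, Sym2.eq_iff]
  grind

theorem undirGraph_adj_iff {n : ℕ} {D : Finset (Fin n × Fin n)} {u v : Fin n} :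
    (undirGraph n D).Adj u v ↔ u ≠ v ∧ s(u, v) ∈ undirEdges D := by
  rw [mk_mem_undirEdges]
  rfl

theorem undirGraph_congr {n : ℕ} {D D' : Finset (Fin n × Fin n)}
    (h : undirEdges D = undirEdges D') : undirGraph n D = undirGraph n D' := by
  ext u v
  rw [undirGraph_adj_iff, undirGraph_adj_iff, h]

theorem edgeSet_undirGraph_subset {n : ℕ} (D : Finset (Fin n × Fin n)) :
    (undirGraph n D).edgeSet ⊆ undirEdges D := by
  intro e
  induction e using Sym2.ind with
  | h u v => exact fun h => (undirGraph_adj_iff.mp h).2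

theorem undirEdges_image {n : ℕ} {g : Fin n × Fin n → Fin n × Fin n}
    (hg : ∀ e, g e = e ∨ g e = rev e) (D : Finset (Fin n × Fin n)) :
    undirEdges (D.image g) = undirEdges D := by
  rw [undirEdges, undirEdges, image_image]
  refine image_congr fun e _ => ?_
  rcases hg e with h | h <;> simp [h, rev, Sym2.eq_swap]

theorem IsDirTree.rev_notMem {n : ℕ} {T : Finset (Fin n × Fin n)} (hT : IsDirTree n T)
    {e : Fin n × Fin n} (he : e ∈ T) : rev e ∉ T := by
  intro hre
  have hne : rev e ≠ e := fun h => (mem_filter.mp (hT.1 he)).2 (congrArg Prod.snd h)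
  have hlt : #(undirEdges T) < #T := by
    refine lt_of_le_of_ne card_image_le fun h => hne (card_image_iff.mp h hre he ?_)
    simp [rev, Sym2.eq_swap]
  have hedges : Nat.card (undirGraph n T).edgeSet ≤ #(undirEdges T) := by
    rw [← Set.ncard_coe_finset, ← Nat.card_coe_set_eq]
    exact Nat.card_mono (finite_toSet _) (edgeSet_undirGraph_subset T)
  have hconn := hT.2.2.card_vert_le_card_edgeSet_add_one
  rw [Nat.card_fin] at hconn
  have hcard := hT.2.1
  omega

theorem IsDirTree.injOn {n : ℕ} {T : Finset (Fin n × Fin n)} (hT : IsDirTree n T)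
    {g : Fin n × Fin n → Fin n × Fin n} (hg : ∀ e, g e = e ∨ g e = rev e) :
    Set.InjOn g T := by
  intro a ha b hb hab
  rcases hg a with h₁ | h₁ <;> rcases hg b with h₂ | h₂ <;> rw [h₁, h₂] at hab
  · exact hab
  · exact absurd (hab ▸ ha) (hT.rev_notMem hb)
  · exact absurd (hab ▸ hb) (hT.rev_notMem ha)
  · rw [← rev_rev a, hab, rev_rev]

theorem isDirTree_iff_injOn {n : ℕ} {T : Finset (Fin n × Fin n)}
    {g : Fin n × Fin n → Fin n × Fin n} (hg : ∀ e, g e = e ∨ g e = rev e)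
    (hgT : IsDirTree n (T.image g)) : IsDirTree n T ↔ Set.InjOn g T := by
  refine ⟨fun hT => hT.injOn hg, fun hinj => ⟨?_, ?_, ?_⟩⟩
  · intro e he
    have hge := hgT.1 (mem_image_of_mem g he)
    rcases hg e with h | h <;> rw [h] at hge
    exacts [hge, rev_mem_E0.mp hge]
  · rw [← card_image_of_injOn hinj, hgT.2.1]
  · rw [← undirGraph_congr (undirEdges_image hg T)]
    exact hgT.2.2

theorem flipEdge_eq_or (n : ℕ) (f : Fin n × Fin n → ℝ) (e : Fin n × Fin n) :
    flipEdge n f e = e ∨ flipEdge n f e = rev e := by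
  unfold flipEdge
  split_ifs <;> simp

theorem sum_flipEdge_fiber {n : ℕ} {E : Finset (Fin n × Fin n)} {f x : Fin n × Fin n → ℝ}
    (hf : ∀ e, f e = 0 ∨ f e = 1) (hfE : ∀ e ∉ E, f e = 0) (hxE : ∀ e ∉ E, x e = 0)
    (a : Fin n × Fin n) :
    ∑ t ∈ E with flipEdge n f t = a, (if f t = 1 then 1 - x t else x t) = Mf n f x a := by
  have hsplit : ∀ t, (if flipEdge n f t = a then (if f t = 1 then 1 - x t else x t) else 0)
      = (if a = t then (if f t = 1 then 0 else x t) else 0)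
        + (if rev a = t then (if f t = 1 then 1 - x t else 0) else 0) := by
    intro t
    by_cases ht : f t = 1
    · have : rev t = a ↔ rev a = t := by constructor <;> rintro rfl <;> rfl
      simp [flipEdge, ht, this]
    · simp [flipEdge, ht, eq_comm]
  rw [sum_filter, sum_congr rfl fun t _ => hsplit t, sum_add_distrib, sum_ite_eq, sum_ite_eq, Mf]
  rcases hf a with ha | ha <;> rcases hf (rev a) with hra | hra <;> by_cases haE : a ∈ E <;>
    by_cases hraE : rev a ∈ E <;> simp_all

theorem IsVertex.eq_zero_or_eq_one {n : ℕ} {E : Finset (Fin n × Fin n)} {d : Fin n → ℤ}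
    {f : Fin n × Fin n → ℝ} (hf : IsVertex n E d f) (e : Fin n × Fin n) : f e = 0 ∨ f e = 1 :=
  if he : e ∈ E then hf.2 e he else Or.inl (hf.1.1 e he)

theorem Pfr_factorization_general (n : ℕ)
    (E : Finset (Fin n × Fin n)) (d : Fin n → ℤ)
    (f : Fin n × Fin n → ℝ) (hf : IsVertex n E d f) (r : Fin n)
    (x : Fin n × Fin n → ℝ) (hx0 : ∀ e, e ∉ E → x e = 0) :
    Pfr n E f r x
      = (∏ e ∈ E, if f e = 1 then x e else 1 - x e) * SArb n r (Mf n f x) := by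
  have htrees : univ.filter (fun T => IsDirTree n T ∧ T ⊆ E ∧ IsArb n r (flipSet n f T))
      = E.powerset.filter (fun T : Finset (Fin n × Fin n) => Set.InjOn (flipEdge n f) T ∧
          T.image (flipEdge n f) ∈ univ.filter (IsArb n r)) := by
    refine Finset.ext fun T => ?_
    simp only [mem_filter, mem_univ, true_and, mem_powerset]
    constructor
    · rintro ⟨hT, hTE, hA⟩
      exact ⟨hTE, hT.injOn (flipEdge_eq_or n f), hA⟩
    · rintro ⟨hTE, hinj, hA⟩
      exact ⟨(isDirTree_iff_injOn (flipEdge_eq_or n f) hA.1).mpr hinj, hTE, hA⟩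
  rw [Pfr, SArb, htrees, sum_prod_sections_of_mem]
  exact congrArg _ (sum_congr rfl fun A _ => prod_congr rfl fun a _ =>
    sum_flipEdge_fiber hf.eq_zero_or_eq_one hf.1.1 hx0 a)

/-- factorization `P_{f,r}(x) = (∏_e x_e^{f_e}(1-x_e)^{1-f_e}) ·
SArb_r(M_f(x))`. -/
theorem Pfr_factorization (n : ℕ) (hn : 2 ≤ n)
    (E : Finset (Fin n × Fin n)) (hE : E ⊆ E0 n) (d : Fin n → ℤ)
    (f : Fin n × Fin n → ℝ) (hf : IsVertex n E d f) (r : Fin n)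
    (x : Fin n × Fin n → ℝ) (hx0 : ∀ e, e ∉ E → x e = 0) :
    Pfr n E f r x
      = (∏ e ∈ E, if f e = 1 then x e else 1 - x e) * SArb n r (Mf n f x) :=
  Pfr_factorization_general n E d f hf r x hx0
end
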